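/- For valid labelings X ≠ Y and any move (σ, I) that maps X to Y, with σ' the corresponding modified proposal, the proposal probabilities satisfy P(σ) · Π_{v∈V} b_v(X(v)) = P(σ') · Π_{v∈V} b_v(Y(v)). -/

import Mathlib

open scoped Classical
open Finset

noncomputable section

namespace DistSampling

variable {V L : Type*} [Fintype V] [Fintype L] [DecidableEq V] [DecidableEq L]
  [Nonempty V] [Nonempty L]

/-- `Sw b v` is the normalizing constant `S_v = Σ_{l ∈ L} b_v(l)`. -/
def Sw (b : V → L → ℝ) (v : V) : ℝ := ∑ l, b v l

/-- `Cstar C R` is the maximum value `C*_R` of the constraint `C_R` over all labelings. -/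
def Cstar (C : Finset V → (V → L) → ℝ) (R : Finset V) : ℝ :=
  Finset.univ.sup' Finset.univ_nonempty (fun X : V → L => C R X)

/-- The weight `w(X)` of a labeling `X`. -/
def weight (b : V → L → ℝ) (𝒮 : Finset (Finset V)) (C : Finset V → (V → L) → ℝ)
    (X : V → L) : ℝ :=
  (∏ v, b v (X v)) * ∏ R ∈ 𝒮, C R X

/-- A vertex is restricted under the filter outcome `I` if it belongs to a
constraint set that fails its filter. -/
def Restricted (𝒮 : Finset (Finset V)) (I : {R // R ∈ 𝒮} → Bool) (v : V) : Prop :=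
  ∃ R : {R // R ∈ 𝒮}, v ∈ R.val ∧ I R = false

/-- The move `(σ, I)` maps the labeling `X` to the labeling `Y`:
active unrestricted vertices adopt their proposal, everyone else keeps their label. -/
def MoveMapsTo (𝒮 : Finset (Finset V)) (σ : V → Option L) (I : {R // R ∈ 𝒮} → Bool)
    (X Y : V → L) : Prop :=
  ∀ v, Y v = if Restricted 𝒮 I v then X v else (σ v).getD (X v)

/-- A choice vector for constraint set `R`: each vertex of `R` chooses 'cur'
(`false`) or, if active, 'prop' (`true`), with at least one 'prop'; vertices
outside `R` make no choice. -/
def IsChoice (σ : V → Option L) (R : Finset V) (c : V → Bool) : Prop :=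
  (∀ v, c v = true → v ∈ R ∧ (σ v).isSome) ∧ (∃ v ∈ R, c v = true)

/-- The potential labeling `ℓ_c` determined by a choice vector `c`. -/
def potential (σ : V → Option L) (X : V → L) (c : V → Bool) : V → L :=
  fun v => if c v then (σ v).getD (X v) else X v

/-- `q_R(σ, X)`: the probability that constraint set `R` passes the local filter. -/
def q (C : Finset V → (V → L) → ℝ) (σ : V → Option L) (X : V → L) (R : Finset V) : ℝ :=
  ∏ c ∈ Finset.univ.filter (fun c : V → Bool => IsChoice σ R c),
    C R (potential σ X c) / Cstar C R

/-- `P(σ)`: the probability of the marking/proposal outcome `σ`. -/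
def Pprop (b : V → L → ℝ) (p : ℝ) (σ : V → Option L) : ℝ :=
  ∏ v, (σ v).elim (1 - p) (fun l => p * b v l / Sw b v)

/-- `P(I | σ, X)`: the probability of the filter outcome `I` given proposal `σ`
and current labeling `X`. -/
def Pfilter (C : Finset V → (V → L) → ℝ) (𝒮 : Finset (Finset V))
    (σ : V → Option L) (X : V → L) (I : {R // R ∈ 𝒮} → Bool) : ℝ :=
  ∏ R : {R // R ∈ 𝒮}, (if I R then q C σ X R.val else 1 - q C σ X R.val)

/-- The transition matrix `M` of the distributed Metropolis chain. -/
def M (b : V → L → ℝ) (p : ℝ) (𝒮 : Finset (Finset V))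
    (C : Finset V → (V → L) → ℝ) : Matrix (V → L) (V → L) ℝ :=
  fun X Y => ∑ σ : V → Option L, ∑ I : {R // R ∈ 𝒮} → Bool,
    if MoveMapsTo 𝒮 σ I X Y then Pprop b p σ * Pfilter C 𝒮 σ X I else 0

/-- `π(X)`: the probability of labeling `X`, proportional to its weight. -/
def pie (b : V → L → ℝ) (𝒮 : Finset (Finset V)) (C : Finset V → (V → L) → ℝ)
    (X : V → L) : ℝ :=
  weight b 𝒮 C X / ∑ Z : V → L, weight b 𝒮 C Z

/-- The modified proposal `σ'` associated with a move taking `X` to `Y`. -/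
def sigma' (X Y : V → L) (σ : V → Option L) : V → Option L :=
  fun v => if X v ≠ Y v then some (X v) else σ v

omit [Fintype V] [Fintype L] [DecidableEq V] [DecidableEq L]
  [Nonempty V] [Nonempty L] in
theorem MoveMapsTo.proposal_eq_of_ne {𝒮 : Finset (Finset V)} {σ : V → Option L}
    {I : {R // R ∈ 𝒮} → Bool} {X Y : V → L} (hmap : MoveMapsTo 𝒮 σ I X Y) {v : V}
    (hv : X v ≠ Y v) : σ v = some (Y v) := by
  have hYv := hmap v
  by_cases hr : Restricted 𝒮 I v
  · rw [if_pos hr] at hYv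
    exact absurd hYv.symm hv
  · rw [if_neg hr] at hYv
    cases hσ : σ v with
    | none => rw [hσ, Option.getD_none] at hYv; exact absurd hYv.symm hv
    | some l => rw [hσ, Option.getD_some] at hYv; rw [hYv]

theorem proposal_ratio_general
(b : V → L → ℝ) (p : ℝ) (𝒮 : Finset (Finset V))
    (X Y : V → L)
    (σ : V → Option L) (I : {R // R ∈ 𝒮} → Bool) (hmap : MoveMapsTo 𝒮 σ I X Y) :
    Pprop b p σ * ∏ v, b v (X v) = Pprop b p (sigma' X Y σ) * ∏ v, b v (Y v) := by
  unfold Pprop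
  rw [← prod_mul_distrib, ← prod_mul_distrib]
  refine prod_congr rfl fun v _ => ?_
  by_cases hv : X v = Y v
  · simp only [sigma', hv, ne_eq, not_true_eq_false, if_false]
  · -- σ proposes `Y v` and σ' proposes `X v`, so both sides equal `p b_v(X v) b_v(Y v) / S_v`.
    simp only [sigma', ne_eq, hv, not_false_eq_true, if_true, hmap.proposal_eq_of_ne hv,
      Option.elim_some]
    ring

/-- the proposal probabilities satisfy
P(σ)·Π_v b_v(X(v)) = P(σ')·Π_v b_v(Y(v)). -/
theorem proposal_ratio
(b : V → L → ℝ) (p : ℝ) (𝒮 : Finset (Finset V)) (C : Finset V → (V → L) → ℝ)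
    (hb : ∀ v l, 0 ≤ b v l) (hS : ∀ v, 0 < Sw b v)
    (hcard : ∀ R ∈ 𝒮, 2 ≤ R.card)
    (hC0 : ∀ R ∈ 𝒮, ∀ X : V → L, 0 ≤ C R X)
    (hCloc : ∀ R ∈ 𝒮, ∀ X Y : V → L, (∀ v ∈ R, X v = Y v) → C R X = C R Y)
    (hCstar : ∀ R ∈ 𝒮, 0 < Cstar C R)
    (hp : 0 < p) (hp1 : p < 1)
    (hvalid : ∃ Z : V → L, 0 < weight b 𝒮 C Z)
    (X Y : V → L) (hX : 0 < weight b 𝒮 C X) (hY : 0 < weight b 𝒮 C Y) (hXY : X ≠ Y)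
    (σ : V → Option L) (I : {R // R ∈ 𝒮} → Bool) (hmap : MoveMapsTo 𝒮 σ I X Y) :
    Pprop b p σ * ∏ v, b v (X v) = Pprop b p (sigma' X Y σ) * ∏ v, b v (Y v) :=
  proposal_ratio_general b p 𝒮 X Y σ I hmap

end DistSampling
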